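/- arXiv:1802.08436 — 2 statements merged into one kernel-verified Lean document; each statement's English description precedes it below -/
import Mathlib

section
/- Let F be a field of characteristic p > 0 with p-degree 1, and let F ⊆ K be a finite purely inseparable field extension. Then K is generated over F by a single element, i.e. K = F(α) for some α ∈ K. -/
/-!
Since `Ω¹_F` has rank one, it is spanned by `dz` for a single `z ∈ F`. Derivations of `F` over
a subfield `N ⊇ F^p` separate `F` from `N`: by Zorn, `y ∉ N` lies outside an intermediate field
`N'` with `F = N'(y)`, and `d/dy` is a derivation of `N'(y) ≅ N'[X]/(X^p - y^p)`. Applied to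
`N = F^p(z)`, whose derivations kill `dz` and hence all of `Ω¹_F`, this gives `F = F^p(z)`, so
`[F : F^p] ≤ p`. Frobenius identifies `K/F` with `K^p/F^p`, so `[K : K^p] = [F : F^p] ≤ p` and
`K = K^p(α)` for some `α`; then `Ω¹_K` is spanned by `dα`, so `Ω_{K/F(α)} = 0`. Thus the
purely inseparable extension `K/F(α)` is unramified, hence separable, hence trivial.
-/

open Polynomial IntermediateField Module KaehlerDifferential

theorem Derivation.map_pow_char {R A M : Type*} [CommSemiring R] [CommSemiring A] [Algebra R A]
    [AddCommMonoid M] [Module A M] [Module R M] [IsScalarTower R A M] (p : ℕ) [CharP A p]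
    (D : Derivation R A M) (a : A) : D (a ^ p) = 0 := by
  rw [D.leibniz_pow, ← Nat.cast_smul_eq_nsmul A, CharP.cast_eq_zero A p, zero_smul]

section ExponentOne

variable {p : ℕ} [Fact p.Prime] {k E : Type*} [Field k] [Field E] [Algebra k E]

theorem isIntegral_of_pow_mem_range {x : E} (hxp : x ^ p ∈ (algebraMap k E).range) :
    IsIntegral k x := by
  obtain ⟨c, hc⟩ := hxp
  exact .of_pow (Fact.out : p.Prime).pos (hc ▸ isIntegral_algebraMap)

variable [CharP E p]

theorem minpoly_eq_X_pow_sub_C_of_algebraMap_eq_pow {x : E} (hx : x ∉ (algebraMap k E).range)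
    {c : k} (hc : algebraMap k E c = x ^ p) : minpoly k x = X ^ p - C c := by
  refine (minpoly.eq_of_irreducible_of_monic ?_ (by simp [hc])
    (monic_X_pow_sub_C c (Fact.out : p.Prime).ne_zero)).symm
  refine X_pow_sub_C_irreducible_of_prime Fact.out fun b hb => hx ⟨b, ?_⟩
  exact frobenius_inj E p (by simp [frobenius_def, ← map_pow, hb, hc])

theorem finrank_adjoin_simple_eq_of_pow_mem_range {x : E} (hx : x ∉ (algebraMap k E).range)
    (hxp : x ^ p ∈ (algebraMap k E).range) : finrank k k⟮x⟯ = p := by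
  obtain ⟨c, hc⟩ := hxp
  rw [adjoin.finrank (isIntegral_of_pow_mem_range ⟨c, hc⟩),
    minpoly_eq_X_pow_sub_C_of_algebraMap_eq_pow hx hc, natDegree_X_pow_sub_C]

theorem mem_adjoin_simple_of_mem_adjoin_simple {x y : E} (hy : y ∉ (algebraMap k E).range)
    (hxp : x ^ p ∈ (algebraMap k E).range) (hyp : y ^ p ∈ (algebraMap k E).range)
    (h : y ∈ k⟮x⟯) : x ∈ k⟮y⟯ := by
  have hx : x ∉ (algebraMap k E).range := fun hx =>
    hy (mem_bot.mp (adjoin_simple_eq_bot_iff.mpr (mem_bot.mpr hx) ▸ h))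
  have := adjoin.finiteDimensional (isIntegral_of_pow_mem_range hxp)
  have hle : k⟮y⟯ ≤ k⟮x⟯ := adjoin_simple_le_iff.mpr h
  rw [eq_of_le_of_finrank_eq hle (by rw [finrank_adjoin_simple_eq_of_pow_mem_range hy hyp,
    finrank_adjoin_simple_eq_of_pow_mem_range hx hxp])]
  exact mem_adjoin_simple_self k x

theorem exists_adjoin_simple_eq_top_iff (hp : ∀ w : E, w ^ p ∈ (algebraMap k E).range) :
    (∃ z : E, k⟮z⟯ = ⊤) ↔ FiniteDimensional k E ∧ finrank k E ≤ p := by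
  constructor
  · rintro ⟨z, hz⟩
    obtain ⟨c, hc⟩ := hp z
    have hint := isIntegral_of_pow_mem_range ⟨c, hc⟩
    have hfin := adjoin.finiteDimensional hint
    rw [hz] at hfin
    refine ⟨topEquiv.toLinearEquiv.finiteDimensional, ?_⟩
    rw [← finrank_top', ← hz, adjoin.finrank hint]
    calc (minpoly k z).natDegree ≤ (X ^ p - C c : k[X]).natDegree :=
          natDegree_le_of_dvd (minpoly.dvd k z (by simp [hc]))
            (X_pow_sub_C_ne_zero (Fact.out : p.Prime).pos c)
      _ = p := natDegree_X_pow_sub_C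
  · rintro ⟨_, hle⟩
    by_cases h : ∀ z, z ∈ (algebraMap k E).range
    · exact ⟨0, by rw [adjoin_zero, eq_top_iff]; exact fun x _ => h x⟩
    obtain ⟨z, hz⟩ := not_forall.mp h
    refine ⟨z, eq_of_le_of_finrank_le le_top ?_⟩
    rw [finrank_top', finrank_adjoin_simple_eq_of_pow_mem_range hz (hp z)]
    exact hle

theorem exists_intermediateField_notMem_adjoin_simple_eq_top
    (hp : ∀ w : E, w ^ p ∈ (algebraMap k E).range) {y : E} (hy : y ∉ (algebraMap k E).range) :
    ∃ N : IntermediateField k E, y ∉ N ∧ N⟮y⟯ = ⊤ := by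
  obtain ⟨N, hN⟩ := zorn_le₀ {N : IntermediateField k E | y ∉ N} fun c hc hchain => by
    rcases c.eq_empty_or_nonempty with rfl | ⟨N₀, hN₀⟩
    · exact ⟨⊥, hy, by simp⟩
    have : Nonempty c := ⟨⟨N₀, hN₀⟩⟩
    refine ⟨⨆ N : c, N.1, fun h => ?_, fun N hN => le_iSup (fun N : c => N.1) ⟨N, hN⟩⟩
    rw [← SetLike.mem_coe, coe_iSup_of_directed hchain.directed, Set.mem_iUnion] at h
    obtain ⟨⟨N, hN⟩, hyN⟩ := h
    exact hc hN hyN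
  have hpN : ∀ w : E, w ^ p ∈ (algebraMap N E).range := fun w => by
    obtain ⟨c, hc⟩ := hp w
    exact ⟨algebraMap k N c, hc⟩
  have hyN : y ∉ (algebraMap N E).range := fun ⟨b, hb⟩ => hN.prop (hb ▸ b.2)
  refine ⟨N, hN.prop, eq_top_iff.mpr fun w _ => ?_⟩
  by_contra hw
  -- by the exchange property `N(w)` still avoids `y`, so maximality forces `w ∈ N`
  have hyNw : y ∉ N⟮w⟯ := fun h =>
    hw (mem_adjoin_simple_of_mem_adjoin_simple hyN (hpN w) (hpN y) h)
  have hNw : N ≤ (N⟮w⟯).restrictScalars k := fun b hb => (N⟮w⟯).algebraMap_mem ⟨b, hb⟩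
  have hwN : w ∈ N := hN.eq_of_le hyNw hNw ▸ mem_adjoin_simple_self N w
  exact hw ((N⟮y⟯).algebraMap_mem ⟨w, hwN⟩)

theorem exists_derivation_eq_one_of_adjoin_simple_eq_top {y : E}
    (hy : y ∉ (algebraMap k E).range) (hyp : y ^ p ∈ (algebraMap k E).range)
    (htop : k⟮y⟯ = ⊤) : ∃ D : Derivation k E E, D y = 1 := by
  have := (algebraMap k E).charP (algebraMap k E).injective p
  obtain ⟨c, hc⟩ := hyp
  have hsurj : Function.Surjective (aeval (R := k) y) := by
    rw [← AlgHom.range_eq_top, ← Algebra.adjoin_singleton_eq_range_aeval,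
      ← adjoin_simple_toSubalgebra_of_isAlgebraic
        (isIntegral_of_pow_mem_range ⟨c, hc⟩).isAlgebraic, htop, top_toSubalgebra]
  -- `d/dX` preserves the ideal of `y` because its generator `X ^ p - c` has zero derivative
  have hker : ∀ g : k[X], aeval y g = 0 → aeval y (derivative' g) = 0 := by
    intro g hg
    obtain ⟨h, rfl⟩ :=
      minpoly_eq_X_pow_sub_C_of_algebraMap_eq_pow hy hc ▸ minpoly.dvd k y hg
    simp [derivative_X_pow, hc]
  exact ⟨Derivation.liftOfSurjective hsurj hker, by
    simpa using Derivation.liftOfSurjective_apply hsurj hker X⟩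

theorem exists_derivation_eq_one (hp : ∀ w : E, w ^ p ∈ (algebraMap k E).range) {y : E}
    (hy : y ∉ (algebraMap k E).range) : ∃ D : Derivation k E E, D y = 1 := by
  obtain ⟨N, hyN, htop⟩ := exists_intermediateField_notMem_adjoin_simple_eq_top hp hy
  have hpN : y ^ p ∈ (algebraMap N E).range := by
    obtain ⟨c, hc⟩ := hp y
    exact ⟨algebraMap k N c, hc⟩
  obtain ⟨D, hD⟩ := exists_derivation_eq_one_of_adjoin_simple_eq_top
    (fun ⟨b, hb⟩ => hyN (hb ▸ b.2)) hpN htop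
  exact ⟨D.restrictScalars k, hD⟩

end ExponentOne

section FrobeniusRange

variable (p : ℕ) [Fact p.Prime] {E : Type*} [Field E] [CharP E p]

theorem pow_mem_range_algebraMap_frobenius_fieldRange (w : E) :
    w ^ p ∈ (algebraMap (frobenius E p).fieldRange E).range :=
  ⟨⟨w ^ p, w, rfl⟩, rfl⟩

theorem adjoin_frobenius_fieldRange_eq_top_of_span_D_eq_top {z : E}
    (hz : Submodule.span E {D ℤ E z} = ⊤) : (↥(frobenius E p).fieldRange)⟮z⟯ = ⊤ := by
  set M := (↥(frobenius E p).fieldRange)⟮z⟯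
  by_contra hne
  obtain ⟨y, hy⟩ : ∃ y, y ∉ M := by simpa [eq_top_iff, SetLike.le_def] using hne
  obtain ⟨D', hD'⟩ := exists_derivation_eq_one (k := M) (y := y)
    (fun w => ⟨⟨w ^ p, M.algebraMap_mem ⟨w ^ p, w, rfl⟩⟩, rfl⟩)
    (fun ⟨b, hb⟩ => hy (hb ▸ b.2))
  have hDz : D' z = 0 := by simpa using D'.map_algebraMap ⟨z, mem_adjoin_simple_self _ z⟩
  obtain ⟨c, hc⟩ := Submodule.mem_span_singleton.mp (hz ▸ Submodule.mem_top : D ℤ E y ∈ _)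
  have := congrArg (D'.restrictScalars ℤ).liftKaehlerDifferential hc
  simp [hD', hDz] at this

theorem span_D_eq_top_of_adjoin_frobenius_fieldRange_eq_top {z : E}
    (h : (↥(frobenius E p).fieldRange)⟮z⟯ = ⊤) : Submodule.span E {D ℤ E z} = ⊤ := by
  set Ep := (frobenius E p).fieldRange
  have hint := isIntegral_of_pow_mem_range (pow_mem_range_algebraMap_frobenius_fieldRange p z)
  rw [eq_top_iff, ← span_range_derivation, Submodule.span_le]
  rintro _ ⟨y, rfl⟩
  have hy : y ∈ Algebra.adjoin Ep {z} := by
    rw [← adjoin_simple_toSubalgebra_of_isAlgebraic hint.isAlgebraic, h]; trivial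
  induction hy using Algebra.adjoin_induction with
  | mem x hx => exact Submodule.subset_span (hx ▸ rfl)
  | algebraMap r =>
    obtain ⟨w, hw⟩ := r.2
    rw [show algebraMap Ep E r = w ^ p from hw.symm, Derivation.map_pow_char p]
    exact zero_mem _
  | add x y _ _ hx hy => simpa using add_mem hx hy
  | mul x y _ _ hx hy =>
    simpa using add_mem (Submodule.smul_mem _ x hy) (Submodule.smul_mem _ y hx)

end FrobeniusRange

theorem finrank_frobenius_fieldRange_eq {p : ℕ} [Fact p.Prime] {F K : Type*} [Field F] [Field K]
    [Algebra F K] [CharP F p] [CharP K p] [FiniteDimensional F K] :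
    finrank (frobenius K p).fieldRange K = finrank (frobenius F p).fieldRange F := by
  set k := (frobenius F p).fieldRange
  let Kp : IntermediateField k K := (frobenius K p).fieldRange.toIntermediateField
    fun ⟨_, a, ha⟩ => ⟨algebraMap F K a, by rw [frobenius_def, ← map_pow]; subst ha; rfl⟩
  have hdeg : finrank F K = finrank k Kp :=
    Algebra.finrank_eq_of_equiv_equiv (R₁ := k) (S₁ := Kp)
      (frobenius F p).rangeRestrictFieldEquiv (frobenius K p).rangeRestrictFieldEquiv
      (by ext x; exact map_pow (algebraMap F K) x p)
  have := (finrank_mul_finrank k Kp K).trans (finrank_mul_finrank k F K).symm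
  rw [← hdeg, mul_comm] at this
  exact Nat.eq_of_mul_eq_mul_right finrank_pos this

theorem exists_span_D_eq_top_of_rank_eq_one {R S : Type*} [CommRing R] [Field S] [Algebra R S]
    (h : Module.rank S Ω[S⁄R] = 1) : ∃ z : S, Submodule.span S {D R S z} = ⊤ := by
  obtain ⟨z, hz⟩ : ∃ z, D R S z ≠ 0 := by
    by_contra! hD
    have htop : (⊤ : Submodule S Ω[S⁄R]) = ⊥ := by
      rw [← span_range_derivation, Submodule.span_eq_bot]
      rintro _ ⟨z, rfl⟩
      exact hD z
    rw [← rank_top, htop, rank_bot] at h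
    exact zero_ne_one h
  exact ⟨z, (finrank_eq_one_iff_of_nonzero _ hz).mp (finrank_eq_of_rank_eq (by simpa using h))⟩

theorem IsPurelyInseparable.adjoin_simple_eq_top_of_span_D_eq_top {R F E : Type*} [CommRing R]
    [Field F] [Field E] [Algebra R F] [Algebra R E] [Algebra F E] [IsScalarTower R F E]
    [FiniteDimensional F E] [IsPurelyInseparable F E] {α : E}
    (h : Submodule.span E {D R E α} = ⊤) : F⟮α⟯ = ⊤ := by
  set M := F⟮α⟯
  have : IsScalarTower R M E := .of_algebraMap_eq fun _ => rfl
  have : Algebra.FormallyUnramified M E := ⟨subsingleton_of_forall_eq 0 fun ω => by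
    obtain ⟨ω, rfl⟩ := KaehlerDifferential.map_surjective R M E ω
    obtain ⟨c, rfl⟩ := Submodule.mem_span_singleton.mp (h ▸ Submodule.mem_top : ω ∈ _)
    have hα : D M E α = 0 := (D M E).map_algebraMap ⟨α, mem_adjoin_simple_self F α⟩
    rw [map_smul, map_D, Algebra.algebraMap_self_apply, hα, smul_zero]⟩
  have := Algebra.FormallyUnramified.isSeparable M E
  refine eq_top_iff.mpr fun y _ => ?_
  obtain ⟨b, rfl⟩ := IsPurelyInseparable.inseparable M y (Algebra.IsSeparable.isSeparable M y)
  exact b.2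

/-- Let `F` be a field of characteristic `p > 0` with `p`-degree `1`
(the `p`-degree is the dimension of the space of absolute Kähler differentials
`Ω¹_{F/ℤ} = Ω¹_{F/F^p}` over `F`), and let `F ⊆ K` be a finite purely inseparable field
extension. Then `K = F(α)` is generated over `F` by a single element. -/
theorem purelyInseparable_simple_of_pdeg_one (F K : Type*) [Field F] [Field K] [Algebra F K]
    (p : ℕ) [Fact p.Prime] [CharP F p]
    (hpdeg : Module.rank F (Ω[F⁄ℤ]) = 1)
    [FiniteDimensional F K] [IsPurelyInseparable F K] :
    ∃ α : K, IntermediateField.adjoin F {α} = ⊤ := by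
  have : CharP K p := charP_of_injective_algebraMap (algebraMap F K).injective p
  obtain ⟨z, hz⟩ := exists_span_D_eq_top_of_rank_eq_one hpdeg
  obtain ⟨_, hF⟩ := (exists_adjoin_simple_eq_top_iff
    (pow_mem_range_algebraMap_frobenius_fieldRange p)).mp
      ⟨z, adjoin_frobenius_fieldRange_eq_top_of_span_D_eq_top p hz⟩
  have hK : finrank (frobenius K p).fieldRange K = finrank (frobenius F p).fieldRange F :=
    finrank_frobenius_fieldRange_eq
  have : FiniteDimensional (frobenius K p).fieldRange K :=
    Module.finite_of_finrank_pos (hK ▸ finrank_pos)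
  obtain ⟨α, hα⟩ := (exists_adjoin_simple_eq_top_iff
    (pow_mem_range_algebraMap_frobenius_fieldRange p)).mpr ⟨this, hK ▸ hF⟩
  exact ⟨α, IsPurelyInseparable.adjoin_simple_eq_top_of_span_D_eq_top
    (span_D_eq_top_of_adjoin_frobenius_fieldRange_eq_top p hα)⟩
end

section
/- Let κ be a field. The κ-algebra homomorphism κ[[a,b,c]]/(a² − b²c) → κ[[u,v]] defined by a ↦ uv, b ↦ u, c ↦ v² is injective, with image the subring κ[[u, uv, v²]]. -/
noncomputable section

/-- The effect of the substitution `a ↦ uv, b ↦ u, c ↦ v²` on exponent vectors. -/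
def expMap6 (d : Fin 3 →₀ ℕ) : Fin 2 →₀ ℕ :=
  d 0 • (Finsupp.single 0 1 + Finsupp.single 1 1) + d 1 • Finsupp.single 0 1 +
    d 2 • Finsupp.single 1 2

/-- `φ : κ[[a,b,c]] → κ[[u,v]]` is the substitution homomorphism `a ↦ uv`, `b ↦ u`, `c ↦ v²`
precisely when its coefficients are given by the evident formula. -/
def IsSubstHom6 (κ : Type*) [Field κ]
    (φ : MvPowerSeries (Fin 3) κ →ₐ[κ] MvPowerSeries (Fin 2) κ) : Prop :=
  ∀ (f : MvPowerSeries (Fin 3) κ) (e : Fin 2 →₀ ℕ),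
    MvPowerSeries.coeff e (φ f) =
      ∑ᶠ d : Fin 3 →₀ ℕ, if expMap6 d = e then MvPowerSeries.coeff d f else 0

/-- The complete monomial subring `κ[[u, uv, v²]] ⊆ κ[[u,v]]`. -/
def monomialSubring (κ : Type*) [Field κ] : Set (MvPowerSeries (Fin 2) κ) :=
  {f | ∀ d : Fin 2 →₀ ℕ, MvPowerSeries.coeff d f ≠ 0 →
    d ∈ AddSubmonoid.closure ({Finsupp.single 0 1, Finsupp.single 0 1 + Finsupp.single 1 1,
      Finsupp.single 1 2} : Set (Fin 2 →₀ ℕ))}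

/-!
Division by `a² − b²c`, which is monic in `a`, writes every series as an `a`-reduced one
`c₀(b, c) + a c₁(b, c)` plus a multiple of `a² − b²c`. On `a`-reduced exponents the exponent map
`(i, j, k) ↦ (i + j, i + 2k)` is injective, with image the monoid generated by `(1, 0)`, `(1, 1)`,
`(0, 2)`, i.e. `{e | e₁ mod 2 ≤ e₀}`. Hence `φ` is injective on `a`-reduced series, which gives
the kernel, and every series supported on that monoid has an `a`-reduced preimage, which gives
the image.
-/

open MvPowerSeries

def exponentMonoid : AddSubmonoid (Fin 2 →₀ ℕ) :=
  AddSubmonoid.closure {Finsupp.single 0 1, Finsupp.single 0 1 + Finsupp.single 1 1,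
    Finsupp.single 1 2}

@[simp] lemma expMap6_apply_zero (d : Fin 3 →₀ ℕ) : expMap6 d 0 = d 0 + d 1 := by
  simp [expMap6]

@[simp] lemma expMap6_apply_one (d : Fin 3 →₀ ℕ) : expMap6 d 1 = d 0 + 2 * d 2 := by
  simp [expMap6, mul_comm]

lemma expMap6_injOn : Set.InjOn expMap6 {d | d 0 ≤ 1} := by
  intro d hd d' hd' h
  have h0 := congrArg (· 0) h
  have h1 := congrArg (· 1) h
  simp only [Set.mem_ofPred_eq, expMap6_apply_zero, expMap6_apply_one] at hd hd' h0 h1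
  ext i
  fin_cases i <;> simp <;> omega

lemma expMap6_mem_exponentMonoid (d : Fin 3 →₀ ℕ) : expMap6 d ∈ exponentMonoid := by
  refine add_mem (add_mem ?_ ?_) ?_ <;>
    exact nsmul_mem (AddSubmonoid.subset_closure (by simp)) _

lemma exists_expMap6_eq_of_mem_exponentMonoid {e : Fin 2 →₀ ℕ} (he : e ∈ exponentMonoid) :
    ∃ d : Fin 3 →₀ ℕ, d 0 ≤ 1 ∧ expMap6 d = e := by
  have hparity : e 1 % 2 ≤ e 0 := by
    induction he using AddSubmonoid.closure_induction with
    | mem x hx => rcases hx with rfl | rfl | rfl <;> simp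
    | zero => simp
    | add x y _ _ hx hy => simp only [Finsupp.add_apply]; omega
  refine ⟨Finsupp.single 0 (e 1 % 2) + Finsupp.single 1 (e 0 - e 1 % 2) +
    Finsupp.single 2 (e 1 / 2), by simp; omega, ?_⟩
  ext i
  fin_cases i <;> simp <;> omega

section Division

variable {R : Type*} [CommRing R]

def AReduced (F : MvPowerSeries (Fin 3) R) : Prop :=
  ∀ d : Fin 3 →₀ ℕ, 2 ≤ d 0 → coeff d F = 0

/-- `raySum f d = ∑ₖ coeff (d + k • (2, -2, -1)) f`: the sum of the coefficients of `f` along the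
ray from `d` that trades `b²c` for `a²`. -/
def raySum (f : MvPowerSeries (Fin 3) R) (d : Fin 3 →₀ ℕ) : R :=
  coeff d f + if h : Finsupp.single 1 2 + Finsupp.single 2 1 ≤ d then
    raySum f (d - (Finsupp.single 1 2 + Finsupp.single 2 1) + Finsupp.single 0 2) else 0
termination_by d 2
decreasing_by
  have := Finsupp.le_def.1 h 2
  simp at this ⊢
  omega

lemma coeff_relation_mul (h : MvPowerSeries (Fin 3) R) (d : Fin 3 →₀ ℕ) :
    coeff d ((X 0 ^ 2 - X 1 ^ 2 * X 2) * h) =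
      (if Finsupp.single 0 2 ≤ d then coeff (d - Finsupp.single 0 2) h else 0) -
      (if Finsupp.single 1 2 + Finsupp.single 2 1 ≤ d then
        coeff (d - (Finsupp.single 1 2 + Finsupp.single 2 1)) h else 0) := by
  rw [← pow_one (X 2 : MvPowerSeries (Fin 3) R), X_pow_eq, X_pow_eq, X_pow_eq,
    monomial_mul_monomial, one_mul, sub_mul, map_sub, coeff_monomial_mul, coeff_monomial_mul,
    one_mul, one_mul]

lemma exists_aReduced_sub_relation_mul (f : MvPowerSeries (Fin 3) R) :
    ∃ h, AReduced (f - (X 0 ^ 2 - X 1 ^ 2 * X 2) * h) := by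
  obtain ⟨h, hh⟩ : ∃ h : MvPowerSeries (Fin 3) R,
      ∀ d, coeff d h = raySum f (d + Finsupp.single 0 2) :=
    ⟨fun d => raySum f (d + Finsupp.single 0 2), fun _ => rfl⟩
  refine ⟨h, fun d hd => ?_⟩
  have hd' : Finsupp.single 0 2 ≤ d := Finsupp.single_le_iff.2 hd
  rw [map_sub, coeff_relation_mul, if_pos hd', hh, hh, tsub_add_cancel_of_le hd', raySum]
  split_ifs <;> simp

def liftReduced (f : MvPowerSeries (Fin 2) R) : MvPowerSeries (Fin 3) R :=
  fun d => if d 0 ≤ 1 then coeff (expMap6 d) f else 0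

lemma aReduced_liftReduced (f : MvPowerSeries (Fin 2) R) : AReduced (liftReduced f) :=
  fun d hd => if_neg (by omega)

end Division

namespace IsSubstHom6

variable {κ : Type*} [Field κ] {φ : MvPowerSeries (Fin 3) κ →ₐ[κ] MvPowerSeries (Fin 2) κ}

lemma map_monomial (hφ : IsSubstHom6 κ φ) (d : Fin 3 →₀ ℕ) (r : κ) :
    φ (monomial d r) = monomial (expMap6 d) r := by
  classical
  refine MvPowerSeries.ext fun e => ?_
  rw [hφ, finsum_eq_single _ d fun d' hd' => by simp [coeff_monomial, hd'], coeff_monomial,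
    coeff_monomial, if_pos rfl]
  split_ifs <;> simp_all

lemma map_relation_eq_zero (hφ : IsSubstHom6 κ φ) : φ (X 0 ^ 2 - X 1 ^ 2 * X 2) = 0 := by
  rw [← pow_one (X 2 : MvPowerSeries (Fin 3) κ), X_pow_eq, X_pow_eq, X_pow_eq,
    monomial_mul_monomial, one_mul, map_sub, hφ.map_monomial, hφ.map_monomial, sub_eq_zero]
  have hexp : expMap6 (Finsupp.single 0 2) = expMap6 (Finsupp.single 1 2 + Finsupp.single 2 1) :=
    Finsupp.ext fun i => by fin_cases i <;> simp
  rw [hexp]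

lemma exists_expMap6_eq_of_coeff_ne_zero (hφ : IsSubstHom6 κ φ) {F : MvPowerSeries (Fin 3) κ}
    {e : Fin 2 →₀ ℕ} (he : coeff e (φ F) ≠ 0) : ∃ d, expMap6 d = e ∧ coeff d F ≠ 0 := by
  by_contra! hF
  exact he <| (hφ F e).trans <| finsum_eq_zero_of_forall_eq_zero fun d => by
    split_ifs with hd
    exacts [hF d hd, rfl]

lemma coeff_expMap6_of_aReduced (hφ : IsSubstHom6 κ φ) {F : MvPowerSeries (Fin 3) κ}
    (hF : AReduced F) {d : Fin 3 →₀ ℕ} (hd : d 0 ≤ 1) : coeff (expMap6 d) (φ F) = coeff d F := by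
  rw [hφ, finsum_eq_single _ d, if_pos rfl]
  intro d' hd'
  split_ifs with h
  · refine hF d' (not_lt.1 fun hd'0 => hd' (expMap6_injOn ?_ hd h))
    simpa [Nat.lt_succ_iff] using hd'0
  · rfl

lemma eq_zero_of_aReduced (hφ : IsSubstHom6 κ φ) {F : MvPowerSeries (Fin 3) κ}
    (hF : AReduced F) (hφF : φ F = 0) : F = 0 := by
  ext d
  by_cases hd : d 0 ≤ 1
  · rw [← hφ.coeff_expMap6_of_aReduced hF hd, hφF, map_zero, map_zero]
  · exact hF d (by omega)

lemma map_liftReduced (hφ : IsSubstHom6 κ φ) {f : MvPowerSeries (Fin 2) κ}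
    (hf : f ∈ monomialSubring κ) : φ (liftReduced f) = f := by
  ext e
  by_cases he : ∃ d : Fin 3 →₀ ℕ, d 0 ≤ 1 ∧ expMap6 d = e
  · obtain ⟨d, hd, rfl⟩ := he
    rw [hφ.coeff_expMap6_of_aReduced (aReduced_liftReduced f) hd, coeff_apply, liftReduced,
      if_pos hd]
  · have hfe : coeff e f = 0 := by
      by_contra hfe
      exact he (exists_expMap6_eq_of_mem_exponentMonoid (hf e hfe))
    rw [hfe]
    by_contra hφe
    obtain ⟨d, rfl, hd⟩ := hφ.exists_expMap6_eq_of_coeff_ne_zero hφe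
    by_cases hd0 : d 0 ≤ 1
    · exact he ⟨d, hd0, rfl⟩
    · exact hd (aReduced_liftReduced f d (by omega))

end IsSubstHom6

/-- The `κ`-algebra homomorphism `κ[[a,b,c]]/(a² − b²c) → κ[[u,v]]` defined by
`a ↦ uv`, `b ↦ u`, `c ↦ v²` is injective (i.e. the kernel of the substitution map on
`κ[[a,b,c]]` is exactly the ideal `(a² − b²c)`), with image the subring `κ[[u, uv, v²]]`. -/
theorem substHom6_ker_and_range (κ : Type*) [Field κ]
    (φ : MvPowerSeries (Fin 3) κ →ₐ[κ] MvPowerSeries (Fin 2) κ) (hφ : IsSubstHom6 κ φ) :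
    RingHom.ker φ.toRingHom =
      Ideal.span {(MvPowerSeries.X 0) ^ 2 - (MvPowerSeries.X 1) ^ 2 * MvPowerSeries.X 2} ∧
    Set.range φ = monomialSubring κ := by
  refine ⟨le_antisymm (fun f hf => ?_) ?_, Set.Subset.antisymm ?_ fun f hf => ?_⟩
  · obtain ⟨h, hred⟩ := exists_aReduced_sub_relation_mul f
    have hfh : f - (X 0 ^ 2 - X 1 ^ 2 * X 2) * h = 0 := by
      refine hφ.eq_zero_of_aReduced hred ?_
      rw [map_sub, map_mul, hφ.map_relation_eq_zero, zero_mul, sub_zero]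
      exact hf
    exact Ideal.mem_span_singleton'.2 ⟨h, by rw [mul_comm]; exact (sub_eq_zero.1 hfh).symm⟩
  · rw [Ideal.span_le, Set.singleton_subset_iff]
    exact hφ.map_relation_eq_zero
  · rintro _ ⟨F, rfl⟩ e he
    obtain ⟨d, rfl, -⟩ := hφ.exists_expMap6_eq_of_coeff_ne_zero he
    exact expMap6_mem_exponentMonoid d
  · exact ⟨liftReduced f, hφ.map_liftReduced hf⟩
end
end
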